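/- arXiv:math/0008193 — 3 statements merged into one kernel-verified Lean document; each statement's English description precedes it below -/
import Mathlib

section
/- Let D ⊆ ℂⁿ be a connected Reinhardt domain and let f = (f_1, …, f_n) : D → ℂⁿ be a holomorphic map satisfying the equivariance condition f_j(e^{iθ_1}z_1, …, e^{iθ_n}z_n) = e^{iθ_j} f_j(z_1, …, z_n) for all real θ_1, …, θ_n, all z ∈ D, and all j = 1, …, n. Then there exist complex numbers λ_1, …, λ_n such that f_j(z) = λ_j z_j for all z ∈ D and all j. -/
open Metric

private lemma single_mul_eq_smul {n : ℕ} (k : Fin n) (a b : ℂ) :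
    (Pi.single k (a * b) : Fin n → ℂ) = a • (Pi.single k b : Fin n → ℂ) := by
  funext m
  by_cases h : m = k
  · subst h; simp
  · simp [Pi.single_eq_of_ne h]

/-- A point of a ball in `ℂⁿ` (sup metric) may have one coordinate replaced by
anything in the corresponding one-dimensional ball. -/
private lemma pi_if_mem_ball {n : ℕ} {x z : Fin n → ℂ} {r : ℝ} (hz : z ∈ ball x r)
    (k : Fin n) {u : ℂ} (hu : u ∈ ball (x k) r) :
    (fun m => if m = k then u else z m) ∈ ball x r := by
  have hr : 0 < r := pos_of_mem_ball hu
  rw [mem_ball, dist_pi_lt_iff hr]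
  intro m
  by_cases h : m = k
  · subst h; simpa using mem_ball.mp hu
  · simp only [if_neg h]
    exact (dist_le_pi_dist z x m).trans_lt (mem_ball.mp hz)

/-- If `w · φ'(w) = 0` on an open set for `φ` holomorphic, then `φ' = 0` there
(by continuity of the derivative, even at `w = 0`). -/
private lemma deriv_eq_zero_of_mul_deriv_eq_zero {φ : ℂ → ℂ} {s : Set ℂ} (hs : IsOpen s)
    (hd : DifferentiableOn ℂ φ s) (h : ∀ w ∈ s, w * deriv φ w = 0) :
    ∀ w ∈ s, deriv φ w = 0 := by
  intro w hw
  rcases eq_or_ne w 0 with rfl | hw0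
  · have hana : AnalyticOnNhd ℂ (deriv φ) s := (hd.analyticOnNhd hs).deriv
    have hcont : ContinuousAt (deriv φ) 0 := (hana 0 hw).continuousAt
    have t1 : Filter.Tendsto (deriv φ) (nhdsWithin (0 : ℂ) {(0 : ℂ)}ᶜ)
        (nhds (deriv φ 0)) := hcont.continuousWithinAt.tendsto
    have ev : (fun _ : ℂ => (0 : ℂ)) =ᶠ[nhdsWithin (0 : ℂ) {(0 : ℂ)}ᶜ] deriv φ := by
      filter_upwards [self_mem_nhdsWithin, mem_nhdsWithin_of_mem_nhds (hs.mem_nhds hw)]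
        with u hu1 hu2
      have hune : u ≠ 0 := hu1
      exact ((mul_eq_zero.mp (h u hu2)).resolve_left hune).symm
    have t2 : Filter.Tendsto (deriv φ) (nhdsWithin (0 : ℂ) {(0 : ℂ)}ᶜ) (nhds 0) :=
      Filter.Tendsto.congr' ev tendsto_const_nhds
    exact tendsto_nhds_unique t1 t2
  · exact (mul_eq_zero.mp (h w hw)).resolve_left hw0

/-- A function on a ball in `ℂ` with vanishing derivative is constant. -/
private lemma eq_center_of_deriv_eq_zero {φ : ℂ → ℂ} {a : ℂ} {r : ℝ}
    (hd : DifferentiableOn ℂ φ (ball a r)) (h : ∀ w ∈ ball a r, deriv φ w = 0) :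
    ∀ w ∈ ball a r, φ w = φ a := by
  intro w hw
  have hr : 0 < r := pos_of_mem_ball hw
  refine (convex_ball a r).is_const_of_fderivWithin_eq_zero hd ?_ hw (mem_ball_self hr)
  intro y hy
  rw [fderivWithin_of_isOpen isOpen_ball hy]
  have hdy : DifferentiableAt ℂ φ y := (hd y hy).differentiableAt (isOpen_ball.mem_nhds hy)
  have hder := hdy.hasDerivAt
  rw [h y hy, hasDerivAt_iff_hasFDerivAt] at hder
  rw [hder.fderiv]
  refine ContinuousLinearMap.ext fun u => ?_
  simp

/-- Any ball in `ℂⁿ` contains a point whose `j`-th coordinate is nonzero. -/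
private lemma exists_ball_coord_ne_zero {n : ℕ} (j : Fin n) (x : Fin n → ℂ) {s : ℝ}
    (hs : 0 < s) : ∃ w : Fin n → ℂ, w ∈ ball x s ∧ w j ≠ 0 := by
  have hδ : ∃ δ : ℝ, 0 < δ ∧ δ < s ∧ x j + (δ : ℂ) ≠ 0 := by
    by_cases h : x j + ((s / 2 : ℝ) : ℂ) = 0
    · refine ⟨s / 4, by positivity, by linarith, fun h4 => ?_⟩
      have h24 : ((s / 2 : ℝ) : ℂ) = ((s / 4 : ℝ) : ℂ) := by linear_combination h - h4
      rw [Complex.ofReal_inj] at h24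
      linarith
    · exact ⟨s / 2, by positivity, by linarith, h⟩
  obtain ⟨δ, hδ0, hδs, hne⟩ := hδ
  refine ⟨fun m => if m = j then x j + (δ : ℂ) else x m, ?_, by simpa using hne⟩
  rw [mem_ball, dist_pi_lt_iff hs]
  intro m
  by_cases h : m = j
  · subst h
    rw [if_pos rfl, dist_eq_norm, add_sub_cancel_left,
      show ‖((δ : ℝ) : ℂ)‖ = |δ| from by rw [Complex.norm_real, Real.norm_eq_abs],
      abs_of_pos hδ0]
    exact hδs
  · simpa [h] using hs

/-- A holomorphic map `f : D → ℂⁿ` on a connected Reinhardt domain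
`D ⊆ ℂⁿ` satisfying `fⱼ(e^{iθ₁}z₁,…,e^{iθₙ}zₙ) = e^{iθⱼ} fⱼ(z)` is of the form
`fⱼ(z) = λⱼ zⱼ`. -/
theorem equivariant_holomorphic_map_is_diagonal
    (n : ℕ) (D : Set (Fin n → ℂ)) (hDopen : IsOpen D) (hDconn : IsConnected D)
    (hRein : ∀ z ∈ D, ∀ θ : Fin n → ℝ,
      (fun j => Complex.exp ((θ j : ℂ) * Complex.I) * z j) ∈ D)
    (f : (Fin n → ℂ) → (Fin n → ℂ))
    (hf : DifferentiableOn ℂ f D)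
    (hequiv : ∀ θ : Fin n → ℝ, ∀ z ∈ D, ∀ j : Fin n,
      f (fun k => Complex.exp ((θ k : ℂ) * Complex.I) * z k) j
        = Complex.exp ((θ j : ℂ) * Complex.I) * f z j) :
    ∃ lam : Fin n → ℂ, ∀ z ∈ D, ∀ j, f z j = lam j * z j := by
  classical
  -- differentiability of components
  have hdiffj : ∀ j : Fin n, DifferentiableOn ℂ (fun w => f w j) D := by
    intro j z hz
    exact (differentiableWithinAt_pi.mp (hf z hz)) j
  have hatj : ∀ j : Fin n, ∀ z ∈ D, DifferentiableAt ℂ (fun w => f w j) z := by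
    intro j z hz
    exact (hdiffj j z hz).differentiableAt (hDopen.mem_nhds hz)
  -- the Euler-type PDE coming from equivariance
  have pde : ∀ z ∈ D, ∀ j k : Fin n,
      z k * (fderiv ℂ (fun w => f w j) z) (Pi.single k 1)
        = (if j = k then 1 else 0) * f z j := by
    intro z hz j k
    set L := fderiv ℂ (fun w => f w j) z with hLdef
    have hfd : HasFDerivAt (fun w => f w j) L z := (hatj j z hz).hasFDerivAt
    -- derivative of the scalar curve
    have h1 : HasDerivAt (fun t : ℝ => (t : ℂ) * Complex.I) Complex.I 0 := by
      simpa using (Complex.ofRealCLM.hasDerivAt (x := (0 : ℝ))).mul_const Complex.I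
    have hs : HasDerivAt (fun t : ℝ => Complex.exp ((t : ℂ) * Complex.I) - 1)
        Complex.I 0 := by
      simpa using h1.cexp.sub_const 1
    -- the rotated curve in `ℂⁿ`
    have hγ : HasDerivAt
        (fun t : ℝ => z + (Complex.exp ((t : ℂ) * Complex.I) - 1) •
          (Pi.single k (z k) : Fin n → ℂ))
        ((Pi.single k (Complex.I * z k) : Fin n → ℂ)) 0 := by
      have h2 := (hs.smul_const (Pi.single k (z k) : Fin n → ℂ)).const_add z
      rw [single_mul_eq_smul]
      exact h2
    have hγ0 : z + (Complex.exp (((0 : ℝ) : ℂ) * Complex.I) - 1) •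
        (Pi.single k (z k) : Fin n → ℂ) = z := by
      simp
    have hcomp : HasDerivAt
        (fun t : ℝ => f (z + (Complex.exp ((t : ℂ) * Complex.I) - 1) •
          (Pi.single k (z k) : Fin n → ℂ)) j)
        (L (Pi.single k (Complex.I * z k))) 0 := by
      have hfd' : HasFDerivAt (fun w => f w j) L
          (z + (Complex.exp (((0 : ℝ) : ℂ) * Complex.I) - 1) •
            (Pi.single k (z k) : Fin n → ℂ)) := by
        rw [hγ0]; exact hfd
      exact (hfd'.restrictScalars ℝ).comp_hasDerivAt 0 hγ
    -- the curve composed with `f _ j` is explicitly known from equivariance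
    have hfun : (fun t : ℝ =>
          f (z + (Complex.exp ((t : ℂ) * Complex.I) - 1) •
            (Pi.single k (z k) : Fin n → ℂ)) j)
        = fun t : ℝ => Complex.exp ((if j = k then (t : ℂ) else 0) * Complex.I) * f z j := by
      funext t
      have h := hequiv (fun m => if m = k then t else 0) z hz j
      have hpt : (fun m => Complex.exp ((((if m = k then t else 0 : ℝ)) : ℂ) * Complex.I) * z m)
          = z + (Complex.exp ((t : ℂ) * Complex.I) - 1) •
            (Pi.single k (z k) : Fin n → ℂ) := by
        funext m
        by_cases hm : m = k
        · subst hm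
          rw [if_pos rfl]
          simp only [Pi.add_apply, Pi.smul_apply, Pi.single_eq_same, smul_eq_mul]
          ring
        · simp [hm, Pi.single_eq_of_ne hm]
      rw [hpt] at h
      rw [h]
      congr 1
      by_cases hjk : j = k <;> simp [hjk]
    -- derivative of the right-hand side
    have hrhs : HasDerivAt
        (fun t : ℝ => Complex.exp ((if j = k then (t : ℂ) else 0) * Complex.I) * f z j)
        ((if j = k then Complex.I else 0) * f z j) 0 := by
      by_cases hjk : j = k
      · simp only [if_pos hjk]
        simpa using h1.cexp.mul_const (f z j)
      · simp only [if_neg hjk]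
        simpa using hasDerivAt_const (0 : ℝ) (Complex.exp (0 * Complex.I) * f z j)
    have huniq : L (Pi.single k (Complex.I * z k))
        = (if j = k then Complex.I else 0) * f z j := by
      rw [hfun] at hcomp
      exact hcomp.unique hrhs
    have hlin : L (Pi.single k (Complex.I * z k))
        = Complex.I * (z k * L (Pi.single k 1)) := by
      rw [show (Pi.single k (Complex.I * z k) : Fin n → ℂ)
          = (Complex.I * z k) • (Pi.single k 1 : Fin n → ℂ) by
        simpa using single_mul_eq_smul k (Complex.I * z k) 1, map_smul, smul_eq_mul]
      ring
    have hI : Complex.I * (z k * L (Pi.single k 1))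
        = Complex.I * ((if j = k then 1 else 0) * f z j) := by
      rw [← hlin, huniq]
      by_cases hjk : j = k <;> simp [hjk]
    exact mul_left_cancel₀ Complex.I_ne_zero hI
  -- derivative of one-variable slices
  have slice_deriv : ∀ (j : Fin n) (z : Fin n → ℂ) (k : Fin n) (w : ℂ),
      (fun m => if m = k then w else z m) ∈ D →
      HasDerivAt (fun u : ℂ => f (fun m => if m = k then u else z m) j)
        (fderiv ℂ (fun p => f p j) (fun m => if m = k then w else z m) (Pi.single k 1)) w := by
    intro j z k w hw
    have hrep : ∀ u : ℂ, (fun m => if m = k then u else z m)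
        = (fun m => if m = k then 0 else z m) + (Pi.single k u : Fin n → ℂ) := by
      intro u; funext m
      by_cases h : m = k
      · subst h; simp
      · simp [h, Pi.single_eq_of_ne h]
    have hsingle : HasDerivAt (fun u : ℂ => (Pi.single k u : Fin n → ℂ))
        ((Pi.single k 1 : Fin n → ℂ)) w := by
      rw [hasDerivAt_pi]
      intro m
      by_cases h : m = k
      · subst h
        simp only [Pi.single_eq_same]
        exact hasDerivAt_id w
      · simp only [Pi.single_eq_of_ne h]
        exact hasDerivAt_const w 0
    have hcurve : HasDerivAt
        (fun u : ℂ => (fun m => if m = k then 0 else z m) + (Pi.single k u : Fin n → ℂ))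
        ((Pi.single k 1 : Fin n → ℂ)) w := hsingle.const_add _
    have hmemD : (fun m => if m = k then 0 else z m) + (Pi.single k w : Fin n → ℂ) ∈ D := by
      rw [← hrep]; exact hw
    have hfd : HasFDerivAt (fun p => f p j)
        (fderiv ℂ (fun p => f p j)
          ((fun m => if m = k then 0 else z m) + (Pi.single k w : Fin n → ℂ)))
        ((fun m => if m = k then 0 else z m) + (Pi.single k w : Fin n → ℂ)) :=
      (hatj j _ hmemD).hasFDerivAt
    have hres := hfd.comp_hasDerivAt w hcurve
    have heqf : (fun u : ℂ => f (fun m => if m = k then u else z m) j)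
        = fun u : ℂ => f ((fun m => if m = k then 0 else z m)
            + (Pi.single k u : Fin n → ℂ)) j := by
      funext u; rw [hrep u]
    rw [heqf, hrep w]
    exact hres
  -- base point
  obtain ⟨z1, hz1⟩ := hDconn.nonempty
  -- the main per-coordinate claim
  have key : ∀ j : Fin n, ∃ c : ℂ, ∀ z ∈ D, f z j = c * z j := by
    intro j
    -- local claim: around any point of D, f_j is a constant multiple of z_j
    have loc : ∀ x : Fin n → ℂ, ∃ R : ℝ, ∃ b : ℂ, x ∈ D →
        0 < R ∧ ball x R ⊆ D ∧ ∀ y ∈ ball x R, f y j = b * y j := by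
      intro x
      by_cases hx : x ∈ D
      swap
      · exact ⟨1, 0, fun h => absurd h hx⟩
      obtain ⟨r, hr, hball⟩ := Metric.isOpen_iff.mp hDopen x hx
      have hmem : ∀ z ∈ ball x r, ∀ (k : Fin n), ∀ u ∈ ball (x k) r,
          (fun m => if m = k then u else z m) ∈ D :=
        fun z hz k u hu => hball (pi_if_mem_ball hz k hu)
      -- Step A: moving one coordinate `k ≠ j` to the center value does not change `f _ j`
      have hA : ∀ z ∈ ball x r, ∀ k, k ≠ j →
          f z j = f (fun m => if m = k then x k else z m) j := by
        intro z hz k hkj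
        have hφd : ∀ u ∈ ball (x k) r,
            HasDerivAt (fun u : ℂ => f (fun m => if m = k then u else z m) j)
              (fderiv ℂ (fun p => f p j) (fun m => if m = k then u else z m)
                (Pi.single k 1)) u :=
          fun u hu => slice_deriv j z k u (hmem z hz k u hu)
        have hφdiff : DifferentiableOn ℂ
            (fun u : ℂ => f (fun m => if m = k then u else z m) j) (ball (x k) r) :=
          fun u hu => ((hφd u hu).differentiableAt).differentiableWithinAt
        have hφz : ∀ u ∈ ball (x k) r,
            u * deriv (fun u : ℂ => f (fun m => if m = k then u else z m) j) u = 0 := by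
          intro u hu
          rw [(hφd u hu).deriv]
          have hp := pde _ (hmem z hz k u hu) j k
          simp only [eq_self_iff_true, if_true] at hp
          rw [if_neg (Ne.symm hkj), zero_mul] at hp
          exact hp
        have hzer := deriv_eq_zero_of_mul_deriv_eq_zero isOpen_ball hφdiff hφz
        have hconst := eq_center_of_deriv_eq_zero hφdiff hzer
        have hzk : z k ∈ ball (x k) r :=
          mem_ball.mpr ((dist_le_pi_dist z x k).trans_lt (mem_ball.mp hz))
        have h1 := hconst (z k) hzk
        have h2 : (fun m => if m = k then z k else z m) = z := by
          funext m
          by_cases h : m = k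
          · subst h; simp
          · simp [h]
        rw [h2] at h1
        exact h1
      -- Step A': every `z` in the ball may be straightened to the slice through `x`
      have hA' : ∀ z ∈ ball x r, f z j = f (fun m => if m = j then z j else x m) j := by
        intro z hz
        have main : ∀ S : Finset (Fin n),
            (fun m => if m = j then z m else if m ∈ S then x m else z m) ∈ ball x r ∧
            f z j = f (fun m => if m = j then z m else if m ∈ S then x m else z m) j := by
          intro S
          induction S using Finset.induction_on with
          | empty =>
            have he : (fun m => if m = j then z m
                else if m ∈ (∅ : Finset (Fin n)) then x m else z m) = z := by
              funext m; by_cases h : m = j <;> simp [h]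
            rw [he]; exact ⟨hz, rfl⟩
          | @insert a S ha IH =>
            obtain ⟨hmemS, hfS⟩ := IH
            by_cases haj : a = j
            · have he : (fun m => if m = j then z m
                  else if m ∈ insert a S then x m else z m)
                  = (fun m => if m = j then z m else if m ∈ S then x m else z m) := by
                funext m
                by_cases h : m = j
                · simp [h]
                · have hma : m ≠ a := fun hc => h (hc.trans haj)
                  simp [h, Finset.mem_insert, hma]
              rw [he]; exact ⟨hmemS, hfS⟩
            · have he : (fun m => if m = j then z m
                  else if m ∈ insert a S then x m else z m)
                  = (fun m => if m = a then x a
                      else (if m = j then z m else if m ∈ S then x m else z m)) := by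
                funext m
                by_cases hma : m = a
                · subst hma
                  simp [haj, Finset.mem_insert]
                · simp only [if_neg hma]
                  by_cases hmj : m = j
                  · simp [hmj]
                  · simp [hmj, Finset.mem_insert, hma]
              constructor
              · rw [he]
                exact pi_if_mem_ball hmemS a (mem_ball_self hr)
              · rw [he, ← hA _ hmemS a haj]
                exact hfS
        have hm := (main Finset.univ).2
        have huniv : (fun m => if m = j then z m
            else if m ∈ (Finset.univ : Finset (Fin n)) then x m else z m)
            = (fun m => if m = j then z j else x m) := by
          funext m
          by_cases h : m = j
          · subst h; simp
          · simp [h]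
        rwa [huniv] at hm
      -- Step B: on the slice through `x` in direction `j`, `f _ j` is linear
      have hψd : ∀ u ∈ ball (x j) r,
          HasDerivAt (fun u : ℂ => f (fun m => if m = j then u else x m) j)
            (fderiv ℂ (fun p => f p j) (fun m => if m = j then u else x m)
              (Pi.single j 1)) u :=
        fun u hu => slice_deriv j x j u (hmem x (mem_ball_self hr) j u hu)
      have hψdiff : DifferentiableOn ℂ
          (fun u : ℂ => f (fun m => if m = j then u else x m) j) (ball (x j) r) :=
        fun u hu => ((hψd u hu).differentiableAt).differentiableWithinAt
      have hrel : ∀ u ∈ ball (x j) r,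
          u * deriv (fun u : ℂ => f (fun m => if m = j then u else x m) j) u
            = f (fun m => if m = j then u else x m) j := by
        intro u hu
        rw [(hψd u hu).deriv]
        have hp := pde _ (hmem x (mem_ball_self hr) j u hu) j j
        simp only [eq_self_iff_true, if_true, one_mul] at hp
        exact hp
      have hψana : AnalyticOnNhd ℂ
          (fun u : ℂ => f (fun m => if m = j then u else x m) j) (ball (x j) r) :=
        hψdiff.analyticOnNhd isOpen_ball
      have hdψdiff : DifferentiableOn ℂ
          (deriv (fun u : ℂ => f (fun m => if m = j then u else x m) j)) (ball (x j) r) :=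
        fun u hu => ((hψana.deriv u hu).differentiableAt).differentiableWithinAt
      have hχ : ∀ u ∈ ball (x j) r,
          u * deriv (deriv (fun u : ℂ => f (fun m => if m = j then u else x m) j)) u = 0 := by
        intro u hu
        have hDψ : HasDerivAt (deriv (fun u : ℂ => f (fun m => if m = j then u else x m) j))
            (deriv (deriv (fun u : ℂ => f (fun m => if m = j then u else x m) j)) u) u :=
          ((hψana.deriv u hu).differentiableAt).hasDerivAt
        have hprod : HasDerivAt
            (fun v : ℂ => v * deriv (fun u : ℂ => f (fun m => if m = j then u else x m) j) v)
            (1 * deriv (fun u : ℂ => f (fun m => if m = j then u else x m) j) u +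
              u * deriv (deriv (fun u : ℂ => f (fun m => if m = j then u else x m) j)) u) u :=
          (hasDerivAt_id u).mul hDψ
        have hev : (fun u : ℂ => f (fun m => if m = j then u else x m) j) =ᶠ[nhds u]
            (fun v : ℂ =>
              v * deriv (fun u : ℂ => f (fun m => if m = j then u else x m) j) v) := by
          filter_upwards [isOpen_ball.mem_nhds hu] with v hv using (hrel v hv).symm
        have hψder := hprod.congr_of_eventuallyEq hev
        have huniq := hψder.unique
          (((hψdiff u hu).differentiableAt (isOpen_ball.mem_nhds hu)).hasDerivAt)
        linear_combination huniq
      have hdd := deriv_eq_zero_of_mul_deriv_eq_zero isOpen_ball hdψdiff hχ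
      have hbconst := eq_center_of_deriv_eq_zero hdψdiff hdd
      refine ⟨r, deriv (fun u : ℂ => f (fun m => if m = j then u else x m) j) (x j),
        fun _ => ⟨hr, hball, ?_⟩⟩
      intro y hy
      have hyj : y j ∈ ball (x j) r :=
        mem_ball.mpr ((dist_le_pi_dist y x j).trans_lt (mem_ball.mp hy))
      have h3 := hrel (y j) hyj
      rw [hbconst (y j) hyj] at h3
      rw [hA' y hy]
      linear_combination -h3
    choose R B hRB using loc
    refine ⟨B z1, fun z hzD => ?_⟩
    -- clopen argument on the connected set D
    set U : Set (Fin n → ℂ) := ⋃ p ∈ {p | p ∈ D ∧ B p = B z1}, ball p (R p) with hU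
    set V : Set (Fin n → ℂ) := ⋃ p ∈ {p | p ∈ D ∧ B p ≠ B z1}, ball p (R p) with hV
    have hUopen : IsOpen U := isOpen_biUnion fun p _ => isOpen_ball
    have hVopen : IsOpen V := isOpen_biUnion fun p _ => isOpen_ball
    have hDUV : D ⊆ U ∪ V := by
      intro w hw
      by_cases hB : B w = B z1
      · exact Or.inl (Set.mem_biUnion ⟨hw, hB⟩ (mem_ball_self (hRB w hw).1))
      · exact Or.inr (Set.mem_biUnion ⟨hw, hB⟩ (mem_ball_self (hRB w hw).1))
    have hdisj : ¬ (D ∩ (U ∩ V)).Nonempty := by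
      rintro ⟨w, _, hwU, hwV⟩
      obtain ⟨p, hp, hwp⟩ := Set.mem_iUnion₂.mp hwU
      obtain ⟨q, hq, hwq⟩ := Set.mem_iUnion₂.mp hwV
      obtain ⟨hpD, hpB⟩ := hp
      obtain ⟨hqD, hqB⟩ := hq
      have hs : 0 < min (R p - dist w p) (R q - dist w q) := by
        rw [mem_ball] at hwp hwq
        exact lt_min (by linarith) (by linarith)
      obtain ⟨y, hy, hyj⟩ := exists_ball_coord_ne_zero j w hs
      rw [mem_ball] at hy
      have hyp : y ∈ ball p (R p) := by
        rw [mem_ball]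
        calc dist y p ≤ dist y w + dist w p := dist_triangle y w p
          _ < min (R p - dist w p) (R q - dist w q) + dist w p := by linarith
          _ ≤ (R p - dist w p) + dist w p := by
              have := min_le_left (R p - dist w p) (R q - dist w q); linarith
          _ = R p := by ring
      have hyq : y ∈ ball q (R q) := by
        rw [mem_ball]
        calc dist y q ≤ dist y w + dist w q := dist_triangle y w q
          _ < min (R p - dist w p) (R q - dist w q) + dist w q := by linarith
          _ ≤ (R q - dist w q) + dist w q := by
              have := min_le_right (R p - dist w p) (R q - dist w q); linarith
          _ = R q := by ring
      have e1 := (hRB p hpD).2.2 y hyp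
      have e2 := (hRB q hqD).2.2 y hyq
      have : B p = B q := mul_right_cancel₀ hyj (e1.symm.trans e2)
      exact hqB (this ▸ hpB)
    rcases hDUV hzD with hzU | hzV
    · obtain ⟨p, hp, hzp⟩ := Set.mem_iUnion₂.mp hzU
      obtain ⟨hpD, hpB⟩ := hp
      rw [(hRB p hpD).2.2 z hzp, hpB]
    · exfalso
      have hne1 : (D ∩ U).Nonempty :=
        ⟨z1, hz1, Set.mem_biUnion ⟨hz1, rfl⟩ (mem_ball_self (hRB z1 hz1).1)⟩
      have hne2 : (D ∩ V).Nonempty := ⟨z, hzD, hzV⟩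
      exact hdisj (hDconn.isPreconnected U V hUopen hVopen hDUV hne1 hne2)
  choose lam hlam using key
  exact ⟨lam, fun z hz j => hlam j z hz⟩
end

section
/- Let n ≥ 2. Every finite composition of overshears of ℂⁿ and permutations of the coordinates of ℂⁿ can be joined to the identity map by a path in Aut(ℂⁿ): there is a continuous map γ : [0,1] → C(ℂⁿ, ℂⁿ) (compact-open topology) such that every γ(t) is a bijective holomorphic self-map of ℂⁿ with holomorphic inverse, γ(0) is the given composition, and γ(1) is the identity. -/
/-!
Both kinds of generators can be deformed to the identity through automorphisms, and such
deformations compose pointwise in `t`. For an overshear with data `(f, h)`, shrinking the base,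
`(f_t, h_t)(w) = ((1 - t) f(w), h((1 - t) w))`, ends at `z_n ↦ h(0) z_n`, and the extra factor
`exp(-t log h(0))` brings the constant `h(0)` to `1`; every intermediate map is an overshear,
hence an automorphism. A transposition of coordinates `a ≠ b` is the reflection
`z ↦ z - (z_a - z_b)(e_a - e_b)`, the value at `ν = -1` of the linear maps that scale `e_a - e_b`
by `ν` and fix the hyperplane `z_a = z_b`; moving `ν` from `-1` to `1` inside `ℂ \ {0}` joins it
to the identity.
-/

/-- An overshear of `ℂ^(m+1)`: the map fixing the first `m` coordinates and sending
the last coordinate `z_{m+1}` to `f(z₁,…,z_m) + h(z₁,…,z_m)·z_{m+1}`, where `f, h`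
are entire on `ℂ^m` and `h` is nowhere zero. -/
def IsOvershear {m : ℕ} (F : (Fin (m + 1) → ℂ) → (Fin (m + 1) → ℂ)) : Prop :=
  ∃ f h : (Fin m → ℂ) → ℂ,
    Differentiable ℂ f ∧ Differentiable ℂ h ∧ (∀ w, h w ≠ 0) ∧
    ∀ z : Fin (m + 1) → ℂ,
      F z = Fin.snoc (Fin.init z)
        (f (Fin.init z) + h (Fin.init z) * z (Fin.last m))

/-- A permutation of the coordinates of `ℂ^(m+1)`. -/
def IsCoordPermutation {m : ℕ} (F : (Fin (m + 1) → ℂ) → (Fin (m + 1) → ℂ)) : Prop :=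
  ∃ σ : Equiv.Perm (Fin (m + 1)), ∀ z : Fin (m + 1) → ℂ, F z = fun j => z (σ j)

open Function Complex

section Isotopy

variable {E : Type*} [NormedAddCommGroup E] [NormedSpace ℂ E]

def IsBiholomorphic (F : E → E) : Prop :=
  Differentiable ℂ F ∧
    ∃ G : E → E, Differentiable ℂ G ∧ LeftInverse G F ∧ RightInverse G F

theorem isBiholomorphic_id : IsBiholomorphic (id : E → E) :=
  ⟨differentiable_id, id, differentiable_id, fun _ => rfl, fun _ => rfl⟩

theorem IsBiholomorphic.comp {F G : E → E} (hF : IsBiholomorphic F) (hG : IsBiholomorphic G) :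
    IsBiholomorphic (F ∘ G) := by
  obtain ⟨hFd, F', hF'd, hFl, hFr⟩ := hF
  obtain ⟨hGd, G', hG'd, hGl, hGr⟩ := hG
  exact ⟨hFd.comp hGd, G' ∘ F', hG'd.comp hF'd, hFl.comp hGl, hFr.comp hGr⟩

theorem isBiholomorphic_of_comp_eq_id {F G : E → E} (hF : Differentiable ℂ F)
    (hG : Differentiable ℂ G) (hGF : G ∘ F = id) (hFG : F ∘ G = id) : IsBiholomorphic F :=
  ⟨hF, G, hG, congrFun hGF, congrFun hFG⟩

def IsBiholomorphicallyIsotopicToId (F : E → E) : Prop :=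
  ∃ Φ : unitInterval → E → E, Continuous (uncurry Φ) ∧ (∀ t, IsBiholomorphic (Φ t)) ∧
    Φ 0 = F ∧ Φ 1 = id

theorem isBiholomorphicallyIsotopicToId_id : IsBiholomorphicallyIsotopicToId (id : E → E) :=
  ⟨fun _ => id, continuous_snd, fun _ => isBiholomorphic_id, rfl, rfl⟩

theorem IsBiholomorphicallyIsotopicToId.comp {F G : E → E}
    (hF : IsBiholomorphicallyIsotopicToId F) (hG : IsBiholomorphicallyIsotopicToId G) :
    IsBiholomorphicallyIsotopicToId (F ∘ G) := by
  obtain ⟨Φ, hΦ, hΦt, rfl, hΦ1⟩ := hF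
  obtain ⟨Ψ, hΨ, hΨt, rfl, hΨ1⟩ := hG
  refine ⟨fun t => Φ t ∘ Ψ t, hΦ.comp (continuous_fst.prodMk hΨ),
    fun t => (hΦt t).comp (hΨt t), rfl, by simp only [hΦ1, hΨ1, id_comp]⟩

theorem isBiholomorphicallyIsotopicToId_foldr_comp (L : List (E → E))
    (hL : ∀ F ∈ L, IsBiholomorphicallyIsotopicToId F) :
    IsBiholomorphicallyIsotopicToId (L.foldr (· ∘ ·) id) := by
  induction L with
  | nil => exact isBiholomorphicallyIsotopicToId_id
  | cons F L ih =>
    exact (hL F List.mem_cons_self).comp (ih fun G hG => hL G (List.mem_cons_of_mem _ hG))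

end Isotopy

theorem mul_exp_neg_log {c : ℂ} (hc : c ≠ 0) : c * exp (-log c) = 1 := by
  rw [exp_neg, exp_log hc, mul_inv_cancel₀ hc]

theorem Differentiable.finSnoc {E F : Type*} [NormedAddCommGroup E] [NormedSpace ℂ E]
    [NormedAddCommGroup F] [NormedSpace ℂ F] {n : ℕ} {f : E → Fin n → F} {g : E → F}
    (hf : Differentiable ℂ f) (hg : Differentiable ℂ g) :
    Differentiable ℂ fun x => (Fin.snoc (f x) (g x) : Fin (n + 1) → F) := by
  refine differentiable_pi.2 fun j => Fin.lastCases ?_ (fun i => ?_) j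
  · simpa using hg
  · simpa using differentiable_pi.1 hf i

theorem differentiable_finInit {F : Type*} [NormedAddCommGroup F] [NormedSpace ℂ F] {n : ℕ} :
    Differentiable ℂ (Fin.init : (Fin (n + 1) → F) → Fin n → F) :=
  differentiable_pi.2 fun _ => differentiable_apply _

section Overshear

variable {m : ℕ}

def overshear (f h : (Fin m → ℂ) → ℂ) (z : Fin (m + 1) → ℂ) : Fin (m + 1) → ℂ :=
  Fin.snoc (Fin.init z) (f (Fin.init z) + h (Fin.init z) * z (Fin.last m))

theorem overshear_comp_overshear (f₁ h₁ f₂ h₂ : (Fin m → ℂ) → ℂ) :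
    overshear f₁ h₁ ∘ overshear f₂ h₂ =
      overshear (fun w => f₁ w + h₁ w * f₂ w) (fun w => h₁ w * h₂ w) := by
  funext z
  simp only [comp_apply, overshear, Fin.init_snoc, Fin.snoc_last]
  ring_nf

theorem overshear_zero_one :
    overshear (fun _ => 0) (fun _ => 1) = (id : (Fin (m + 1) → ℂ) → _) := by
  funext z
  simp [overshear, Fin.snoc_init_self]

theorem differentiable_overshear {f h : (Fin m → ℂ) → ℂ} (hf : Differentiable ℂ f)
    (hh : Differentiable ℂ h) : Differentiable ℂ (overshear f h) :=
  differentiable_finInit.finSnoc <|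
    (hf.comp differentiable_finInit).add
      ((hh.comp differentiable_finInit).mul (differentiable_apply _))

theorem isBiholomorphic_overshear {f h : (Fin m → ℂ) → ℂ} (hf : Differentiable ℂ f)
    (hh : Differentiable ℂ h) (hh₀ : ∀ w, h w ≠ 0) : IsBiholomorphic (overshear f h) := by
  refine isBiholomorphic_of_comp_eq_id (differentiable_overshear hf hh)
    (differentiable_overshear (f := fun w => -f w * (h w)⁻¹) (h := fun w => (h w)⁻¹)
      (hf.neg.mul (hh.inv hh₀)) (hh.inv hh₀)) ?_ ?_ <;>
    rw [overshear_comp_overshear, ← overshear_zero_one] <;> congr 1 <;> funext w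
  · ring
  · exact inv_mul_cancel₀ (hh₀ w)
  · linear_combination (-f w) * mul_inv_cancel₀ (hh₀ w)
  · exact mul_inv_cancel₀ (hh₀ w)

theorem continuous_overshear {X : Type*} [TopologicalSpace X] {f h : X → (Fin m → ℂ) → ℂ}
    (hf : Continuous (uncurry f)) (hh : Continuous (uncurry h)) :
    Continuous (uncurry fun x => overshear (f x) (h x)) := by
  have hw : Continuous fun p : X × (Fin (m + 1) → ℂ) => (p.1, Fin.init p.2) :=
    continuous_fst.prodMk continuous_snd.finInit
  exact continuous_snd.finInit.finSnoc <|
    (hf.comp hw).add ((hh.comp hw).mul ((continuous_apply _).comp continuous_snd))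

theorem isBiholomorphicallyIsotopicToId_overshear {f h : (Fin m → ℂ) → ℂ}
    (hf : Differentiable ℂ f) (hh : Differentiable ℂ h) (hh₀ : ∀ w, h w ≠ 0) :
    IsBiholomorphicallyIsotopicToId (overshear f h) := by
  set s : unitInterval → ℂ := fun t => ((1 - t : ℝ) : ℂ)
  refine ⟨fun t => overshear (fun w => s t * f w)
    (fun w => h (s t • w) * exp (-(t : ℂ) * log (h 0))), ?_, fun t => ?_, ?_, ?_⟩
  · have hfc := hf.continuous
    have hhc := hh.continuous
    exact continuous_overshear (by fun_prop) (by fun_prop)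
  · exact isBiholomorphic_overshear (hf.const_mul _) (by fun_prop)
      fun w => mul_ne_zero (hh₀ _) (exp_ne_zero _)
  · simp [s]
  · simp [s, mul_exp_neg_log (hh₀ 0), ← overshear_zero_one]

theorem IsOvershear.isBiholomorphicallyIsotopicToId
    {F : (Fin (m + 1) → ℂ) → Fin (m + 1) → ℂ} (hF : IsOvershear F) :
    IsBiholomorphicallyIsotopicToId F := by
  obtain ⟨f, h, hf, hh, hh₀, hFfh⟩ := hF
  rw [show F = overshear f h from funext hFfh]
  exact isBiholomorphicallyIsotopicToId_overshear hf hh hh₀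

end Overshear

section DilationAlong

variable {E : Type*} [NormedAddCommGroup E] [NormedSpace ℂ E] (φ : E →L[ℂ] ℂ) (v : E)

noncomputable def dilationAlong (ν : ℂ) (z : E) : E :=
  z + ((ν - 1) * φ z) • v

theorem dilationAlong_one : dilationAlong φ v 1 = id := by
  funext z
  simp [dilationAlong]

variable {φ v}

theorem dilationAlong_comp_dilationAlong (hφv : φ v = 1) (ν ν' : ℂ) :
    dilationAlong φ v ν ∘ dilationAlong φ v ν' = dilationAlong φ v (ν * ν') := by
  funext z
  simp only [comp_apply, dilationAlong, map_add, map_smul, hφv, smul_eq_mul, add_assoc,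
    ← add_smul]
  congr 2
  ring

theorem isBiholomorphic_dilationAlong (hφv : φ v = 1) {ν : ℂ} (hν : ν ≠ 0) :
    IsBiholomorphic (dilationAlong φ v ν) := by
  have hdiff : ∀ μ, Differentiable ℂ (dilationAlong φ v μ) := fun μ => by
    unfold dilationAlong; fun_prop
  refine isBiholomorphic_of_comp_eq_id (hdiff ν) (hdiff ν⁻¹) ?_ ?_ <;>
    rw [dilationAlong_comp_dilationAlong hφv, ← dilationAlong_one φ v]
  · rw [inv_mul_cancel₀ hν]
  · rw [mul_inv_cancel₀ hν]

theorem isBiholomorphicallyIsotopicToId_dilationAlong (hφv : φ v = 1) {ν : ℂ}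
    (hν : ν ≠ 0) :
    IsBiholomorphicallyIsotopicToId (dilationAlong φ v ν) := by
  refine ⟨fun t => dilationAlong φ v (ν * exp (-(t : ℂ) * log ν)), ?_,
    fun t => isBiholomorphic_dilationAlong hφv (mul_ne_zero hν (exp_ne_zero _)), ?_, ?_⟩
  · unfold dilationAlong; fun_prop
  · simp
  · simp [mul_exp_neg_log hν, dilationAlong_one]

end DilationAlong

theorem exists_swap_eq_dilationAlong {n : ℕ} {a b : Fin n} (hab : a ≠ b) :
    ∃ (φ : (Fin n → ℂ) →L[ℂ] ℂ) (v : Fin n → ℂ), φ v = 1 ∧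
      (fun z j => z (Equiv.swap a b j)) = dilationAlong φ v (-1) := by
  refine ⟨(2 : ℂ)⁻¹ • (.proj a - .proj b), Pi.single a 1 - Pi.single b 1, ?_, ?_⟩
  · norm_num [hab, hab.symm]
  · funext z j
    simp only [dilationAlong, Equiv.swap_apply_def]
    split_ifs with hja hjb <;> simp [*, hab.symm] <;> ring

theorem isBiholomorphicallyIsotopicToId_permuteCoords {n : ℕ} (σ : Equiv.Perm (Fin n)) :
    IsBiholomorphicallyIsotopicToId (fun z j => z (σ j) : (Fin n → ℂ) → Fin n → ℂ) := by
  induction σ using Equiv.Perm.swap_induction_on with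
  | one => exact isBiholomorphicallyIsotopicToId_id
  | swap_mul σ a b hab ih =>
    obtain ⟨φ, v, hφv, hswap⟩ := exists_swap_eq_dilationAlong hab
    exact ih.comp (hswap ▸ isBiholomorphicallyIsotopicToId_dilationAlong hφv (by norm_num))

theorem IsCoordPermutation.isBiholomorphicallyIsotopicToId {m : ℕ}
    {F : (Fin (m + 1) → ℂ) → Fin (m + 1) → ℂ} (hF : IsCoordPermutation F) :
    IsBiholomorphicallyIsotopicToId F := by
  obtain ⟨σ, hσ⟩ := hF
  rw [show F = _ from funext hσ]
  exact isBiholomorphicallyIsotopicToId_permuteCoords σ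

/-- For `n = m + 1 ≥ 2`, every finite composition of overshears and
coordinate permutations of `ℂⁿ` can be joined to the identity by a continuous path
`γ : [0,1] → C(ℂⁿ, ℂⁿ)` (compact-open topology) all of whose values are
biholomorphic automorphisms of `ℂⁿ`. -/
theorem composition_of_overshears_and_permutations_joined_to_identity
    (m : ℕ)
    (L : List ((Fin (m + 1) → ℂ) → (Fin (m + 1) → ℂ)))
    (hL : ∀ F ∈ L, IsOvershear F ∨ IsCoordPermutation F) :
    ∃ γ : C(Set.Icc (0 : ℝ) 1, C((Fin (m + 1) → ℂ), (Fin (m + 1) → ℂ))),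
      (∀ t : Set.Icc (0 : ℝ) 1,
        Differentiable ℂ (γ t) ∧
        ∃ G : (Fin (m + 1) → ℂ) → (Fin (m + 1) → ℂ),
          Differentiable ℂ G ∧ Function.LeftInverse G (γ t) ∧
          Function.RightInverse G (γ t)) ∧
      (∀ z : Fin (m + 1) → ℂ,
        γ ⟨0, by norm_num⟩ z = L.foldr (· ∘ ·) id z) ∧
      (∀ z : Fin (m + 1) → ℂ, γ ⟨1, by norm_num⟩ z = z) := by
  have hisotopic : ∀ F ∈ L, IsBiholomorphicallyIsotopicToId F := fun F hF =>
    (hL F hF).elim IsOvershear.isBiholomorphicallyIsotopicToId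
      IsCoordPermutation.isBiholomorphicallyIsotopicToId
  obtain ⟨Φ, hΦ, hΦt, hΦ0, hΦ1⟩ := isBiholomorphicallyIsotopicToId_foldr_comp L hisotopic
  exact ⟨ContinuousMap.curry ⟨uncurry Φ, hΦ⟩, hΦt, congrFun hΦ0, congrFun hΦ1⟩
end

section
/- Let n ≥ 2, let i_1 < … < i_r (with r ≥ 1) be indices in {1, …, n}, let s = i_1, and let D = ℂⁿ \ (⋃_{k=1}^{r} {z : z_{i_k} = 0}). Then the identity map of D and the automorphism (z_1, …, z_n) ↦ (z_1, …, z_{s-1}, 1/z_s, z_{s+1}, …, z_n) lie in different connected components of Aut(D) with the compact-open topology. -/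
/-- The complement in `ℂⁿ` of the union of the coordinate hyperplanes
`{z : z_{i k} = 0}`, `k = 1, …, r`. -/
def HyperplaneComplement (n r : ℕ) (i : Fin r → Fin n) : Set (Fin n → ℂ) :=
  {z : Fin n → ℂ | ∀ k : Fin r, z (i k) ≠ 0}

/-- `Aut(D)` for `D ⊆ ℂⁿ`: the set of continuous self-maps of `D` that are
holomorphic (i.e. restrictions to `D` of maps holomorphic on `D`) and admit a
holomorphic inverse, topologized by the compact-open topology. -/
def AutOf {n : ℕ} (D : Set (Fin n → ℂ)) : Set C(D, D) :=
  {F : C(D, D) |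
    (∃ F' : (Fin n → ℂ) → (Fin n → ℂ), DifferentiableOn ℂ F' D ∧
        ∀ z : D, (F z : Fin n → ℂ) = F' (z : Fin n → ℂ)) ∧
    ∃ G : C(D, D),
      (∃ G' : (Fin n → ℂ) → (Fin n → ℂ), DifferentiableOn ℂ G' D ∧
          ∀ z : D, (G z : Fin n → ℂ) = G' (z : Fin n → ℂ)) ∧
      (∀ z : D, G (F z) = z) ∧ (∀ z : D, F (G z) = z)}

/-!
For the meridian loop `γ` around the hyperplane `z_s = 0`, every `F : C(D, D)` gives a closed loop
`t ↦ (F (γ t))_s` in `ℂ \ {0}`. Its winding number around `0` does not change under uniformly small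
perturbations of the loop, so it is a locally constant function of `F` in the compact-open topology
and hence constant on connected components of `Aut(D)`. It is `1` for the identity and `-1` for the
inversion `z_s ↦ 1 / z_s`.
-/

open Complex hiding I
open unitInterval

theorem sub_eq_sub_of_exp_comp_eq {A : Type*} [TopologicalSpace A] [PreconnectedSpace A]
    {g₁ g₂ : A → ℂ} (hg₁ : Continuous g₁) (hg₂ : Continuous g₂) (h : exp ∘ g₁ = exp ∘ g₂)
    (a b : A) : g₂ b - g₂ a = g₁ b - g₁ a := by
  have hexp : exp (g₂ a - g₁ a) = 1 := by
    rw [exp_sub, show exp (g₂ a) = exp (g₁ a) from (congrFun h a).symm, div_self (exp_ne_zero _)]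
  have hshift : (fun x => g₁ x + (g₂ a - g₁ a)) = g₂ := by
    refine isCoveringMap_exp.eq_of_comp_eq (by fun_prop) (by fun_prop) ?_ a (by ring)
    ext x
    simp [exp_add, hexp, show exp (g₁ x) = exp (g₂ x) from congrFun h x]
  rw [← hshift]
  ring

theorem exists_eq_exp_comp (γ : C(I, ℂ)) (hγ : ∀ t, γ t ≠ 0) : ∃ g : C(I, ℂ), ⇑γ = exp ∘ g := by
  obtain ⟨g, hg, -⟩ := isCoveringMap_exp.exists_path_lifts ⟨fun t => ⟨γ t, hγ t⟩, by fun_prop⟩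
    (log (γ 0)) (Subtype.ext (exp_log (hγ 0)).symm)
  exact ⟨g, funext fun t => congrArg Subtype.val (congrFun hg t).symm⟩

open Classical in
/-- `2πi` times the winding number of `γ` around `0` when `γ` is a closed loop; junk value `0` when
`γ` has no continuous logarithm, i.e. vanishes somewhere. -/
noncomputable def logIncrement (γ : C(I, ℂ)) : ℂ :=
  if h : ∃ g : C(I, ℂ), ⇑γ = exp ∘ g then h.choose 1 - h.choose 0 else 0

theorem logIncrement_eq_of_eq_exp_comp {γ : C(I, ℂ)} (g : C(I, ℂ)) (hg : ⇑γ = exp ∘ g) :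
    logIncrement γ = g 1 - g 0 := by
  have h : ∃ g : C(I, ℂ), ⇑γ = exp ∘ g := ⟨g, hg⟩
  rw [logIncrement, dif_pos h]
  exact sub_eq_sub_of_exp_comp_eq g.continuous h.choose.continuous (hg ▸ h.choose_spec) 0 1

theorem logIncrement_of_eq_exp_mul {γ : C(I, ℂ)} {c : ℂ} (h : ∀ t : I, γ t = exp (c * t)) :
    logIncrement γ = c := by
  rw [logIncrement_eq_of_eq_exp_comp ⟨fun t : I => c * t, by fun_prop⟩ (funext h)]
  simp

/-- `γ / γ₀` takes values in the slit plane, so `g₀ + log (γ / γ₀)` is a continuous logarithm of `γ`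
whenever `g₀` is one of `γ₀`. -/
theorem logIncrement_eq_of_norm_sub_lt {γ₀ γ : C(I, ℂ)} (hγ₀ : γ₀ 0 = γ₀ 1) (hγ : γ 0 = γ 1)
    (h : ∀ t, ‖γ t - γ₀ t‖ < ‖γ₀ t‖) : logIncrement γ = logIncrement γ₀ := by
  have hγ₀_ne : ∀ t, γ₀ t ≠ 0 := fun t => norm_pos_iff.mp ((norm_nonneg _).trans_lt (h t))
  have hslit : ∀ t, γ t / γ₀ t ∈ slitPlane := fun t => by
    simpa using mem_slitPlane_of_norm_lt_one (z := γ t / γ₀ t - 1) (by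
      rw [div_sub_one (hγ₀_ne t), norm_div]
      exact (div_lt_one (norm_pos_iff.mpr (hγ₀_ne t))).mpr (h t))
  have hγ_ne : ∀ t, γ t ≠ 0 := fun t h0 => slitPlane_ne_zero (hslit t) (by simp [h0])
  obtain ⟨g₀, hg₀⟩ := exists_eq_exp_comp γ₀ hγ₀_ne
  let q : C(I, ℂ) := ⟨fun t => log (γ t / γ₀ t),
    (γ.continuous.div γ₀.continuous hγ₀_ne).clog hslit⟩
  have hlift : ⇑γ = exp ∘ (g₀ + q) := funext fun t => by
    have hexp_g₀ : exp (g₀ t) = γ₀ t := (congrFun hg₀ t).symm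
    simp only [q, Function.comp_apply, ContinuousMap.add_apply, ContinuousMap.coe_mk, exp_add,
      hexp_g₀, exp_log (div_ne_zero (hγ_ne t) (hγ₀_ne t)), mul_div_cancel₀ _ (hγ₀_ne t)]
  have hq : q 0 = q 1 := by simp [q, hγ, hγ₀]
  rw [logIncrement_eq_of_eq_exp_comp _ hlift, logIncrement_eq_of_eq_exp_comp _ hg₀,
    ContinuousMap.add_apply, ContinuousMap.add_apply, hq]
  ring

theorem isLocallyConstant_logIncrement_comp {X : Type*} [TopologicalSpace X]
    {Θ : X → C(I, ℂ)} (hΘ : Continuous Θ) (hclosed : ∀ x, Θ x 0 = Θ x 1)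
    (hne : ∀ x t, Θ x t ≠ 0) : IsLocallyConstant (logIncrement ∘ Θ) := by
  rw [IsLocallyConstant.iff_eventually_eq]
  intro x
  obtain ⟨t₀, -, ht₀⟩ := isCompact_univ.exists_isMinOn Set.univ_nonempty
    (Θ x).continuous.norm.continuousOn
  have hε : 0 < ‖Θ x t₀‖ := norm_pos_iff.mpr (hne x t₀)
  filter_upwards [hΘ.continuousAt (Metric.ball_mem_nhds _ hε)] with y hy
  refine logIncrement_eq_of_norm_sub_lt (hclosed x) (hclosed y) fun t => ?_
  calc ‖Θ y t - Θ x t‖ = dist (Θ y t) (Θ x t) := (dist_eq_norm _ _).symm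
    _ ≤ dist (Θ y) (Θ x) := ContinuousMap.dist_apply_le_dist t
    _ < ‖Θ x t₀‖ := hy
    _ ≤ ‖Θ x t‖ := ht₀ (Set.mem_univ t)

theorem mem_autOf_of_involutive {n : ℕ} {D : Set (Fin n → ℂ)} {F : C(D, D)}
    {F' : (Fin n → ℂ) → (Fin n → ℂ)} (hF' : DifferentiableOn ℂ F' D)
    (hFF' : ∀ z : D, (F z : Fin n → ℂ) = F' z) (hF : Function.Involutive F) : F ∈ AutOf D :=
  ⟨⟨F', hF', hFF'⟩, F, ⟨F', hF', hFF'⟩, hF, hF⟩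

theorem differentiableAt_update_inv {𝕜 ι : Type*} [NontriviallyNormedField 𝕜] [Fintype ι]
    [DecidableEq ι] {s : ι} {z : ι → 𝕜} (hz : z s ≠ 0) :
    DifferentiableAt 𝕜 (fun w : ι → 𝕜 => Function.update w s (w s)⁻¹) z := by
  rw [differentiableAt_pi]
  intro j
  rcases eq_or_ne j s with rfl | hj
  · simp only [Function.update_self]
    exact DifferentiableAt.inv (by fun_prop) hz
  · simpa [hj] using differentiableAt_apply (𝕜 := 𝕜) j z

theorem update_one_mem_hyperplaneComplement {n r : ℕ} (i : Fin r → Fin n) (s : Fin n) {w : ℂ}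
    (hw : w ≠ 0) : Function.update (1 : Fin n → ℂ) s w ∈ HyperplaneComplement n r i := fun k => by
  rcases eq_or_ne (i k) s with h | h <;> simp [h, hw]

noncomputable def HyperplaneComplement.meridian {n r : ℕ} (i : Fin r → Fin n) (s : Fin n) :
    C(I, HyperplaneComplement n r i) :=
  ⟨fun t => ⟨Function.update 1 s (exp (2 * Real.pi * Complex.I * (t : ℝ))),
    update_one_mem_hyperplaneComplement i s (exp_ne_zero _)⟩, by fun_prop⟩

theorem HyperplaneComplement.meridian_zero_eq_one {n r : ℕ} (i : Fin r → Fin n) (s : Fin n) :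
    meridian i s 0 = meridian i s 1 := by
  ext : 1
  simp [meridian]

noncomputable def coordLoop {n : ℕ} {D : Set (Fin n → ℂ)} (s : Fin n) (γ : C(I, D))
    (F : C(D, D)) : C(I, ℂ) :=
  ((⟨fun z => (z : Fin n → ℂ) s, (continuous_apply s).comp continuous_subtype_val⟩ : C(D, ℂ)).comp
    F).comp γ

theorem continuous_coordLoop {n : ℕ} {D : Set (Fin n → ℂ)} (s : Fin n) (γ : C(I, D)) :
    Continuous (coordLoop s γ) :=
  (ContinuousMap.continuous_precomp γ).comp (ContinuousMap.continuous_postcomp _)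

theorem identity_and_inversion_in_different_components_general
    (n r : ℕ) (hr : 0 < r)
    (i : Fin r → Fin n)
    (s : Fin n) (hs : s = i ⟨0, hr⟩)
    (Fid Finv : C(HyperplaneComplement n r i, HyperplaneComplement n r i))
    (hFid : ∀ z : HyperplaneComplement n r i, Fid z = z)
    (hFinv : ∀ z : HyperplaneComplement n r i,
      (Finv z : Fin n → ℂ) = Function.update (z : Fin n → ℂ) s ((z : Fin n → ℂ) s)⁻¹) :
    Fid ∈ AutOf (HyperplaneComplement n r i) ∧
    Finv ∈ AutOf (HyperplaneComplement n r i) ∧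
    Finv ∉ connectedComponentIn (AutOf (HyperplaneComplement n r i)) Fid := by
  have hDs : ∀ z ∈ HyperplaneComplement n r i, z s ≠ 0 := fun z hz => hs ▸ hz ⟨0, hr⟩
  have hFid_aut : Fid ∈ AutOf (HyperplaneComplement n r i) :=
    mem_autOf_of_involutive differentiableOn_id (fun z => congrArg Subtype.val (hFid z))
      fun z => by rw [hFid, hFid]
  have hFinv_aut : Finv ∈ AutOf (HyperplaneComplement n r i) :=
    mem_autOf_of_involutive
      (fun z hz => (differentiableAt_update_inv (hDs z hz)).differentiableWithinAt) hFinv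
      fun z => Subtype.ext (by simp [hFinv])
  refine ⟨hFid_aut, hFinv_aut, fun hmem => ?_⟩
  let γ := HyperplaneComplement.meridian i s
  have hconst := (isLocallyConstant_logIncrement_comp (continuous_coordLoop s γ)
    (fun F => by simp only [coordLoop, ContinuousMap.comp_apply,
      HyperplaneComplement.meridian_zero_eq_one, γ])
    (fun F t => hDs _ (F (γ t)).2)).apply_eq_of_isPreconnected
    isPreconnected_connectedComponentIn hmem (mem_connectedComponentIn hFid_aut)
  have hid : logIncrement (coordLoop s γ Fid) = 2 * Real.pi * Complex.I :=
    logIncrement_of_eq_exp_mul fun t => by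
      simp [coordLoop, hFid, γ, HyperplaneComplement.meridian]
  have hinv : logIncrement (coordLoop s γ Finv) = -(2 * Real.pi * Complex.I) :=
    logIncrement_of_eq_exp_mul fun t => by
      simp [coordLoop, hFinv, γ, HyperplaneComplement.meridian, ← exp_neg]
  simp only [Function.comp_apply, hid, hinv] at hconst
  exact two_pi_I_ne_zero (by linear_combination -hconst / 2)

/-- For `n ≥ 2`, `D = ℂⁿ` minus the coordinate hyperplanes
`{z_{i k} = 0}` (with `i₁ < … < i_r`, `r ≥ 1`) and `s = i₁`, the identity and
the coordinate inversion `z ↦ (z₁, …, 1/z_s, …, zₙ)` are both in `Aut(D)` but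
lie in different connected components of `Aut(D)` (compact-open topology). -/
theorem identity_and_inversion_in_different_components
    (n r : ℕ) (hn : 2 ≤ n) (hr : 0 < r)
    (i : Fin r → Fin n) (hi : StrictMono i)
    (s : Fin n) (hs : s = i ⟨0, hr⟩)
    (Fid Finv : C(HyperplaneComplement n r i, HyperplaneComplement n r i))
    (hFid : ∀ z : HyperplaneComplement n r i, Fid z = z)
    (hFinv : ∀ z : HyperplaneComplement n r i,
      (Finv z : Fin n → ℂ) = Function.update (z : Fin n → ℂ) s ((z : Fin n → ℂ) s)⁻¹) :
    Fid ∈ AutOf (HyperplaneComplement n r i) ∧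
    Finv ∈ AutOf (HyperplaneComplement n r i) ∧
    Finv ∉ connectedComponentIn (AutOf (HyperplaneComplement n r i)) Fid :=
  identity_and_inversion_in_different_components_general n r hr i s hs Fid Finv hFid hFinv
end
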